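/- arXiv:1402.3638 — 2 statements merged into one kernel-verified Lean document; each statement's English description precedes it below -/
import Mathlib

section
/- Let H be a simple hypergraph and let K = H|_U be the partial hypergraph of H on a vertex subset U (the hypergraph whose edges are the edges of H contained in U). Then every minimal vertex cover of K can be extended to a minimal vertex cover of H, i.e., for every minimal vertex cover C of K there exists a minimal vertex cover C' of H with C ⊆ C'. -/
open Finset

structure SimpleHypergraph (α : Type*) [DecidableEq α] where
  edges : Finset (Finset α)
  nonempty_edges : ∀ E ∈ edges, E.Nonempty
  antichain : ∀ E ∈ edges, ∀ F ∈ edges, E ⊆ F → E = F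

namespace SimpleHypergraph

variable {α : Type*} [DecidableEq α]

/-- The vertex set of a simple hypergraph: the union of its edges. -/
def verts (H : SimpleHypergraph α) : Finset α := H.edges.sup id

/-- `C` is a vertex cover: every edge meets `C`. -/
def IsCover (H : SimpleHypergraph α) (C : Finset α) : Prop :=
  ∀ E ∈ H.edges, ∃ v ∈ E, v ∈ C

/-- `C` is a minimal vertex cover. -/
def IsMinCover (H : SimpleHypergraph α) (C : Finset α) : Prop :=
  H.IsCover C ∧ ∀ D ⊂ C, ¬ H.IsCover D

/-- `A` is independent: it contains no edge. -/
def Indep (H : SimpleHypergraph α) (A : Finset α) : Prop :=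
  ∀ E ∈ H.edges, ¬ E ⊆ A

/-- The partial hypergraph of `H` on a vertex subset `U`. -/
def restrict (H : SimpleHypergraph α) (U : Finset α) : SimpleHypergraph α where
  edges := H.edges.filter (· ⊆ U)
  nonempty_edges := fun E hE => H.nonempty_edges E (Finset.mem_filter.mp hE).1
  antichain := fun E hE F hF h =>
    H.antichain E (Finset.mem_filter.mp hE).1 F (Finset.mem_filter.mp hF).1 h

/-- The maximum cardinality of a minimal vertex cover (big height). -/
noncomputable def alpha0' (H : SimpleHypergraph α) : ℕ :=
  sSup {n : ℕ | ∃ C : Finset α, H.IsMinCover C ∧ n = C.card}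

/-- A bouquet of `H`: a partial hypergraph whose edges have a common vertex,
with a designated flower in each edge belonging to no other edge. -/
structure BouquetOf (H : SimpleHypergraph α) where
  edges : Finset (Finset α)
  edges_nonempty : edges.Nonempty
  subset : edges ⊆ H.edges
  core : ∃ v, ∀ E ∈ edges, v ∈ E
  flower : Finset α → α
  flower_spec : ∀ E ∈ edges, ∀ F ∈ edges, (flower E ∈ F ↔ E = F)

def BouquetOf.flowers {H : SimpleHypergraph α} (B : H.BouquetOf) : Finset α :=
  B.edges.image B.flower

def BouquetOf.verts {H : SimpleHypergraph α} (B : H.BouquetOf) : Finset α :=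
  B.edges.sup id

/-- The union of the edge sets of a finite family of bouquets. -/
def famEdges {H : SimpleHypergraph α} {j : ℕ} (B : Fin j → H.BouquetOf) :
    Finset (Finset α) := Finset.univ.sup fun i => (B i).edges

/-- The union of the flower sets of a finite family of bouquets. -/
def famFlowers {H : SimpleHypergraph α} {j : ℕ} (B : Fin j → H.BouquetOf) :
    Finset α := Finset.univ.sup fun i => (B i).flowers

/-- The union of the vertex sets of a finite family of bouquets. -/
def famVerts {H : SimpleHypergraph α} {j : ℕ} (B : Fin j → H.BouquetOf) :
    Finset α := Finset.univ.sup fun i => (B i).verts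

/-- A semi-strongly disjoint family of bouquets of `H`. -/
def SSD (H : SimpleHypergraph α) {j : ℕ} (B : Fin j → H.BouquetOf) : Prop :=
  (∀ p q : Fin j, p ≠ q → ∀ E ∈ (B p).edges, ∀ f ∈ (B q).flowers, f ∉ E) ∧
  H.Indep (famVerts B \ famFlowers B)

/-- `d'_H`: the maximum of `|E(𝓑)|` over semi-strongly disjoint sets of bouquets. -/
noncomputable def dPrime (H : SimpleHypergraph α) : ℕ :=
  sSup {n : ℕ | ∃ (j : ℕ) (B : Fin j → H.BouquetOf), H.SSD B ∧ n = (famEdges B).card}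

end SimpleHypergraph

namespace SimpleHypergraph

variable {α : Type*} [DecidableEq α] {H : SimpleHypergraph α}

theorem mem_verts_of_mem_edge {E : Finset α} {v : α} (hE : E ∈ H.edges) (hv : v ∈ E) :
    v ∈ H.verts :=
  Finset.mem_sup.mpr ⟨E, hE, hv⟩

theorem isMinCover_iff_minimal {C : Finset α} : H.IsMinCover C ↔ Minimal H.IsCover C :=
  minimal_iff_forall_lt.symm

theorem IsCover.exists_isMinCover_subset {D : Finset α} (hD : H.IsCover D) :
    ∃ C ⊆ D, H.IsMinCover C := by
  obtain ⟨C, hCD, hmin⟩ := exists_minimal_le_of_wellFoundedLT H.IsCover D hD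
  exact ⟨C, hCD, isMinCover_iff_minimal.mpr hmin⟩

theorem IsMinCover.exists_private_edge {C : Finset α} (hC : H.IsMinCover C) {c : α}
    (hc : c ∈ C) : ∃ E ∈ H.edges, ∀ v ∈ E, v ∈ C → v = c := by
  have hnot : ¬ H.IsCover (C.erase c) := hC.2 _ (Finset.erase_ssubset hc)
  simp only [IsCover, Finset.mem_erase, not_forall, not_exists, not_and] at hnot
  obtain ⟨E, hE, hmiss⟩ := hnot
  exact ⟨E, hE, fun v hvE hvC => by_contra fun hne => hmiss v hvE hne hvC⟩

theorem isCover_union_sdiff_of_isCover_restrict {U C : Finset α}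
    (hC : (H.restrict U).IsCover C) : H.IsCover (C ∪ (H.verts \ U)) := by
  intro E hE
  by_cases hEU : E ⊆ U
  · obtain ⟨v, hvE, hvC⟩ := hC E (Finset.mem_filter.mpr ⟨hE, hEU⟩)
    exact ⟨v, hvE, Finset.mem_union_left _ hvC⟩
  · obtain ⟨v, hvE, hvU⟩ := Finset.not_subset.mp hEU
    exact ⟨v, hvE, Finset.mem_union_right _
      (Finset.mem_sdiff.mpr ⟨mem_verts_of_mem_edge hE hvE, hvU⟩)⟩

/-- The private edge of `c ∈ C` lies in `U`, so inside `C ∪ (V(H) \ U)` only `c` can cover it. -/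
theorem IsMinCover.subset_of_isCover_of_subset_union_sdiff {U C D : Finset α}
    (hC : (H.restrict U).IsMinCover C) (hD : H.IsCover D) (hDsub : D ⊆ C ∪ (H.verts \ U)) :
    C ⊆ D := by
  intro c hc
  obtain ⟨E, hE, hprivate⟩ := hC.exists_private_edge hc
  obtain ⟨hEH, hEU⟩ := Finset.mem_filter.mp hE
  obtain ⟨v, hvE, hvD⟩ := hD E hEH
  rcases Finset.mem_union.mp (hDsub hvD) with hvC | hvOut
  · rwa [← hprivate v hvE hvC]
  · exact absurd (hEU hvE) (Finset.mem_sdiff.mp hvOut).2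

end SimpleHypergraph

open SimpleHypergraph in
/-- every minimal vertex cover of `H|_U` extends to a minimal
vertex cover of `H`. -/
theorem stmt1 {α : Type*} [DecidableEq α] (H : SimpleHypergraph α)
    (U : Finset α) (C : Finset α) (hC : (H.restrict U).IsMinCover C) :
    ∃ C' : Finset α, H.IsMinCover C' ∧ C ⊆ C' := by
  obtain ⟨C', hC'sub, hC'⟩ :=
    (isCover_union_sdiff_of_isCover_restrict hC.1).exists_isMinCover_subset
  exact ⟨C', hC', hC.subset_of_isCover_of_subset_union_sdiff hC'.1 hC'sub⟩
end

section
/- Let B = {B₁, ..., B_j} be a semi-strongly disjoint set of bouquets of a simple hypergraph H. Then the flower set F(B) is a minimal vertex cover of the partial hypergraph H|_{V(B)} of H on the vertex set V(B) of B. -/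
/-!
Every edge of `H|_{V(𝓑)}` meets `F(𝓑)` because `V(𝓑) \ F(𝓑)` is independent. For minimality,
each flower `ℓ` of an edge `E` of `B_p` is the only flower in `E`: the other flowers of `B_p`
avoid `E` by the bouquet condition, those of the other bouquets by semi-strong disjointness.
So removing `ℓ` from `F(𝓑)` leaves `E` uncovered.
-/

open Finset

namespace SimpleHypergraph

variable {α : Type*} [DecidableEq α]

theorem mem_restrict_edges {H : SimpleHypergraph α} {U E : Finset α} :
    E ∈ (H.restrict U).edges ↔ E ∈ H.edges ∧ E ⊆ U :=
  Finset.mem_filter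

theorem isCover_restrict_of_indep_sdiff {H : SimpleHypergraph α} {U C : Finset α}
    (h : H.Indep (U \ C)) : (H.restrict U).IsCover C := by
  intro E hE
  obtain ⟨hEH, hEU⟩ := mem_restrict_edges.mp hE
  by_contra! hEC
  exact h E hEH fun v hv => Finset.mem_sdiff.mpr ⟨hEU hv, hEC v hv⟩

theorem isMinCover_of_forall_exists_private_edge {H : SimpleHypergraph α} {C : Finset α}
    (hC : H.IsCover C) (hpriv : ∀ c ∈ C, ∃ E ∈ H.edges, ∀ v ∈ E, v ∈ C → v = c) :
    H.IsMinCover C := by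
  refine ⟨hC, fun D hDC hD => ?_⟩
  obtain ⟨c, hcC, hcD⟩ := Finset.exists_of_ssubset hDC
  obtain ⟨E, hE, hEc⟩ := hpriv c hcC
  obtain ⟨v, hvE, hvD⟩ := hD E hE
  exact hcD (hEc v hvE (hDC.subset hvD) ▸ hvD)

variable {H : SimpleHypergraph α} {j : ℕ} {B : Fin j → H.BouquetOf}

theorem mem_famFlowers {f : α} :
    f ∈ famFlowers B ↔ ∃ p, ∃ E ∈ (B p).edges, (B p).flower E = f := by
  simp [famFlowers, BouquetOf.flowers]

theorem subset_famVerts {p : Fin j} {E : Finset α} (hE : E ∈ (B p).edges) :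
    E ⊆ famVerts B := fun v hv => by
  simp only [famVerts, BouquetOf.verts, Finset.mem_sup, id]
  exact ⟨p, Finset.mem_univ p, E, hE, hv⟩

theorem SSD.eq_flower_of_mem {p : Fin j} {E : Finset α} {v : α} (hB : H.SSD B)
    (hE : E ∈ (B p).edges) (hvE : v ∈ E) (hv : v ∈ famFlowers B) :
    v = (B p).flower E := by
  obtain ⟨q, F, hF, rfl⟩ := mem_famFlowers.mp hv
  obtain rfl | hpq := eq_or_ne p q
  · rw [((B p).flower_spec F hF E hE).mp hvE]
  · exact absurd hvE (hB.1 p q hpq E hE _ (Finset.mem_image_of_mem _ hF))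

end SimpleHypergraph

open SimpleHypergraph in
/-- the flower set of a semi-strongly disjoint set of bouquets `𝓑`
is a minimal vertex cover of `H|_{V(𝓑)}`. -/
theorem stmt4 {α : Type*} [DecidableEq α] (H : SimpleHypergraph α)
    {j : ℕ} (B : Fin j → H.BouquetOf) (hB : H.SSD B) :
    (H.restrict (famVerts B)).IsMinCover (famFlowers B) := by
  refine isMinCover_of_forall_exists_private_edge
    (isCover_restrict_of_indep_sdiff hB.2) fun f hf => ?_
  obtain ⟨p, E, hE, rfl⟩ := mem_famFlowers.mp hf
  refine ⟨E, mem_restrict_edges.mpr ⟨(B p).subset hE, subset_famVerts hE⟩,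
    fun v hvE hv => hB.eq_flower_of_mem hE hvE hv⟩
end
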